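/- For n ≥ 3, the cocktail party graph CP(n) = K_{2n} minus a perfect matching has strong domination number 2, and for any vertex v, the graph CP(n) − v has strong domination number 1; hence st_{γ_st}(CP(n)) = 1. -/

import Mathlib

open SimpleGraph

/-- `D` is a strong dominating set of `G`: every vertex outside `D` has a neighbor
in `D` whose degree is at least its own. -/
def IsStrongDominating {V : Type*} (G : SimpleGraph V) (D : Set V) : Prop :=
  ∀ v ∉ D, ∃ u ∈ D, G.Adj v u ∧ (G.neighborSet v).ncard ≤ (G.neighborSet u).ncard

/-- The strong domination number. -/
noncomputable def gammaSt {V : Type*} (G : SimpleGraph V) : ℕ :=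
  sInf {n | ∃ D : Set V, D.Finite ∧ IsStrongDominating G D ∧ D.ncard = n}

/-- The stability of the strong domination number: the minimum size of a vertex set
whose removal changes the strong domination number. -/
noncomputable def stGammaSt {V : Type*} (G : SimpleGraph V) : ℕ :=
  sInf {n | ∃ S : Set V, S.Finite ∧ S.ncard = n ∧ gammaSt (G.induce Sᶜ) ≠ gammaSt G}

/-- The join of two graphs. -/
def joinG {V W : Type*} (G : SimpleGraph V) (H : SimpleGraph W) : SimpleGraph (V ⊕ W) :=
  SimpleGraph.fromRel (fun x y =>
    match x, y with
    | Sum.inl a, Sum.inl b => G.Adj a b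
    | Sum.inr a, Sum.inr b => H.Adj a b
    | _, _ => True)

/-- `n` disjoint copies of `K₂`. -/
def nK2 (n : ℕ) : SimpleGraph (Fin n × Fin 2) where
  Adj x y := x.1 = y.1 ∧ x.2 ≠ y.2
  symm := ⟨fun x y h => ⟨h.1.symm, h.2.symm⟩⟩
  loopless := ⟨fun x h => h.2 rfl⟩

/-! Every vertex of `CP(n)` has degree `2n - 2`, so strong domination reduces to domination:
a vertex together with its partner dominates, while no single vertex dominates its own partner.
In `CP(n) - v` the partner of `v` is adjacent to all other vertices, so it has maximum degree and
strongly dominates on its own. Deleting the empty set leaves `γ_st` unchanged, hence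
`st_{γ_st}(CP(n)) = 1`. -/

section StrongDomination

variable {V W : Type*} {G : SimpleGraph V} {H : SimpleGraph W}

lemma IsStrongDominating.image (e : G ≃g H) {D : Set V} (hD : IsStrongDominating G D) :
    IsStrongDominating H (e '' D) := by
  intro w hw
  obtain ⟨u, hu, hadj, hdeg⟩ := hD (e.symm w) fun h => hw ⟨_, h, e.apply_symm_apply w⟩
  refine ⟨e u, Set.mem_image_of_mem e hu, by simpa using e.map_adj_iff.mpr hadj, ?_⟩
  rwa [← e.apply_symm_apply w, ← e.image_neighborSet, ← e.image_neighborSet,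
    Set.ncard_image_of_injective _ e.injective, Set.ncard_image_of_injective _ e.injective]

lemma IsStrongDominating.nonempty [Nonempty V] {D : Set V} (hD : IsStrongDominating G D) :
    D.Nonempty := by
  obtain ⟨v⟩ := ‹Nonempty V›
  by_cases hv : v ∈ D
  · exact ⟨v, hv⟩
  · obtain ⟨u, hu, -⟩ := hD v hv
    exact ⟨u, hu⟩

lemma IsStrongDominating.one_lt_ncard [Nonempty V] (hG : ∀ d, ∃ w ≠ d, ¬G.Adj w d) {D : Set V}
    (hfin : D.Finite) (hD : IsStrongDominating G D) : 1 < D.ncard := by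
  by_contra! hle
  obtain ⟨d, rfl⟩ := Set.ncard_eq_one.mp (le_antisymm hle (hD.nonempty.ncard_pos hfin))
  obtain ⟨w, hwd, hnadj⟩ := hG d
  obtain ⟨u, rfl, hadj, -⟩ := hD w hwd
  exact hnadj hadj

lemma isStrongDominating_of_forall_ncard_neighborSet_eq
    (hreg : ∀ v w, (G.neighborSet v).ncard = (G.neighborSet w).ncard) {D : Set V}
    (hD : ∀ v ∉ D, ∃ u ∈ D, G.Adj v u) : IsStrongDominating G D :=
  fun v hv => (hD v hv).imp fun u ⟨hu, hadj⟩ => ⟨hu, hadj, (hreg v u).le⟩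

lemma isStrongDominating_singleton [Finite V] {u : V} (hu : ∀ w ≠ u, G.Adj w u) :
    IsStrongDominating G {u} := by
  intro w hw
  refine ⟨u, rfl, hu w hw, ?_⟩
  have hNu : G.neighborSet u = {u}ᶜ :=
    Set.ext fun x => ⟨fun h => G.ne_of_adj h |>.symm, fun h => (hu x h).symm⟩
  calc (G.neighborSet w).ncard ≤ ({w}ᶜ : Set V).ncard :=
        Set.ncard_le_ncard (Set.subset_compl_singleton_iff.mpr G.notMem_neighborSet_self)
    _ = (G.neighborSet u).ncard := by
        rw [hNu, Set.ncard_compl, Set.ncard_compl, Set.ncard_singleton, Set.ncard_singleton]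

lemma gammaSt_le {D : Set V} (hfin : D.Finite) (hD : IsStrongDominating G D) :
    gammaSt G ≤ D.ncard :=
  Nat.sInf_le ⟨D, hfin, hD, rfl⟩

lemma gammaSt_eq {k : ℕ} {D : Set V} (hfin : D.Finite) (hD : IsStrongDominating G D)
    (hk : D.ncard = k) (hmin : ∀ D', D'.Finite → IsStrongDominating G D' → k ≤ D'.ncard) :
    gammaSt G = k :=
  le_antisymm (hk ▸ gammaSt_le hfin hD) <|
    le_csInf ⟨_, D, hfin, hD, rfl⟩ fun _ ⟨D', hfin', hD', hcard⟩ => hcard ▸ hmin D' hfin' hD'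

lemma gammaSt_congr (e : G ≃g H) : gammaSt G = gammaSt H := by
  unfold gammaSt
  congr 1
  ext k
  constructor
  · rintro ⟨D, hfin, hD, rfl⟩
    exact ⟨_, hfin.image e, hD.image e, Set.ncard_image_of_injective _ e.injective⟩
  · rintro ⟨D, hfin, hD, rfl⟩
    exact ⟨_, hfin.image e.symm, hD.image e.symm, Set.ncard_image_of_injective _ e.symm.injective⟩

lemma gammaSt_eq_one [Finite V] {u : V} (hu : ∀ w ≠ u, G.Adj w u) : gammaSt G = 1 :=
  have : Nonempty V := ⟨u⟩
  gammaSt_eq (Set.finite_singleton u) (isStrongDominating_singleton hu) (Set.ncard_singleton u)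
    fun _ hfin hD => hD.nonempty.ncard_pos hfin

lemma stGammaSt_eq_one {v : V} (hv : gammaSt (G.induce {v}ᶜ) ≠ gammaSt G) : stGammaSt G = 1 := by
  refine le_antisymm (Nat.sInf_le ⟨{v}, Set.finite_singleton v, Set.ncard_singleton v, hv⟩) ?_
  refine le_csInf ⟨_, {v}, Set.finite_singleton v, rfl, hv⟩ ?_
  rintro _ ⟨S, hfin, rfl, hS⟩
  refine Nat.one_le_iff_ne_zero.mpr fun h => hS ?_
  rw [(Set.ncard_eq_zero hfin).mp h, Set.compl_empty]
  exact gammaSt_congr (induceUnivIso G)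

end StrongDomination

namespace CocktailParty

variable {n : ℕ}

local notation "CP" n => completeMultipartiteGraph (fun _ : Fin n => Fin 2)

def partner (x : Σ _ : Fin n, Fin 2) : Σ _ : Fin n, Fin 2 := ⟨x.1, x.2 + 1⟩

lemma partner_ne (x : Σ _ : Fin n, Fin 2) : partner x ≠ x := by
  obtain ⟨i, a⟩ := x
  simp only [partner, ne_eq, Sigma.mk.injEq, heq_eq_eq, true_and]
  revert a
  decide

lemma eq_or_eq_partner_of_fst_eq {x y : Σ _ : Fin n, Fin 2} (h : y.1 = x.1) :
    y = x ∨ y = partner x := by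
  obtain ⟨i, a⟩ := x
  obtain ⟨j, b⟩ := y
  obtain rfl : j = i := h
  simp only [partner, Sigma.mk.injEq, heq_eq_eq, true_and]
  revert a b
  decide

lemma adj_iff {x y : Σ _ : Fin n, Fin 2} : (CP n).Adj x y ↔ x.1 ≠ y.1 := by
  simp

lemma neighborSet_eq (x : Σ _ : Fin n, Fin 2) : (CP n).neighborSet x = {x, partner x}ᶜ := by
  ext y
  simp only [mem_neighborSet, adj_iff, Set.mem_compl_iff, Set.mem_insert_iff,
    Set.mem_singleton_iff, ne_eq]
  constructor
  · rintro hxy (rfl | rfl)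
    exacts [hxy rfl, hxy rfl]
  · exact fun hy hxy => hy (eq_or_eq_partner_of_fst_eq hxy.symm)

lemma ncard_neighborSet (x : Σ _ : Fin n, Fin 2) : ((CP n).neighborSet x).ncard = 2 * n - 2 := by
  rw [neighborSet_eq, Set.ncard_compl, Set.ncard_pair (partner_ne x).symm]
  simp [Nat.mul_comm]

lemma gammaSt_eq_two (hn : 0 < n) : gammaSt (CP n) = 2 := by
  set x : Σ _ : Fin n, Fin 2 := ⟨⟨0, hn⟩, 0⟩
  refine gammaSt_eq (Set.toFinite {x, partner x}) ?_ (Set.ncard_pair (partner_ne x).symm) ?_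
  · refine isStrongDominating_of_forall_ncard_neighborSet_eq
      (fun v w => by rw [ncard_neighborSet, ncard_neighborSet]) fun v hv => ⟨x, Or.inl rfl, ?_⟩
    have hxv : v ∈ (CP n).neighborSet x := by rwa [neighborSet_eq]
    exact hxv.symm
  · have : Nonempty (Σ _ : Fin n, Fin 2) := ⟨x⟩
    refine fun D hfin hD => hD.one_lt_ncard (fun d => ⟨partner d, partner_ne d, ?_⟩) hfin
    simp [partner]

lemma gammaSt_induce_compl_singleton (v : Σ _ : Fin n, Fin 2) :
    gammaSt ((CP n).induce {v}ᶜ) = 1 := by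
  refine gammaSt_eq_one (u := ⟨partner v, partner_ne v⟩) fun w hw => ?_
  show (CP n).Adj w.1 (partner v)
  rw [adj_iff]
  intro hfst
  rcases eq_or_eq_partner_of_fst_eq (x := v) hfst with hwv | hwp
  · exact w.2 hwv
  · exact hw (Subtype.ext hwp)

end CocktailParty

theorem stGammaSt_cocktailParty (n : ℕ) (hn : 3 ≤ n) :
    gammaSt (completeMultipartiteGraph (fun _ : Fin n => Fin 2)) = 2 ∧
    (∀ v, gammaSt ((completeMultipartiteGraph (fun _ : Fin n => Fin 2)).induce {v}ᶜ) = 1) ∧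
    stGammaSt (completeMultipartiteGraph (fun _ : Fin n => Fin 2)) = 1 := by
  have hn₀ : 0 < n := by omega
  have hγ := CocktailParty.gammaSt_eq_two hn₀
  have hγ_del := CocktailParty.gammaSt_induce_compl_singleton (n := n)
  refine ⟨hγ, hγ_del, stGammaSt_eq_one (v := ⟨⟨0, hn₀⟩, 0⟩) ?_⟩
  rw [hγ_del, hγ]
  decide
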